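/- For all integers n ≥ 1 and k ≥ 0, the number of Catalan words of length n with exactly k short valleys (1-valleys) equals the number of Dyck paths of semilength n having exactly k occurrences of the factor DDUU. -/

import Mathlib

/-- The set of Catalan words of length `n`: words `w` over ℕ with `w 1 = 0` and
`w (i+1) ≤ w i + 1` for all `i`. -/
def CatalanWord (n : ℕ) : Set (List ℕ) :=
  {w | w.length = n ∧ w.getD 0 0 = 0 ∧
    ∀ i, i + 1 < n → w.getD (i + 1) 0 ≤ w.getD i 0 + 1}

/-- Number of `l`-valleys of `w`: occurrences of a factor `a b^l (b+1)` with `a > b`. -/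
def lValleys (l : ℕ) (w : List ℕ) : ℕ :=
  ((Finset.range w.length).filter (fun i =>
    i + l + 1 < w.length ∧
    w.getD (i + 1) 0 < w.getD i 0 ∧
    (∀ j, j < l → w.getD (i + 1 + j) 0 = w.getD (i + 1) 0) ∧
    w.getD (i + l + 1) 0 = w.getD (i + 1) 0 + 1)).card

/-- Dyck paths of semilength `n`, encoded as lists of booleans
(`true` = up step `U`, `false` = down step `D`): `2n` steps, `n` of them up,
and every prefix has at least as many up steps as down steps. -/
def DyckPath (n : ℕ) : Set (List Bool) :=
  {p | p.length = 2 * n ∧ p.count true = n ∧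
    ∀ i, i ≤ 2 * n → (p.take i).count false ≤ (p.take i).count true}

/-- Number of occurrences of the factor `DDUU` in a path. -/
def dduuCount (p : List Bool) : ℕ :=
  ((Finset.range p.length).filter (fun i =>
    i + 3 < p.length ∧ p.getD i false = false ∧ p.getD (i + 1) false = false ∧
    p.getD (i + 2) false = true ∧ p.getD (i + 3) false = true)).card


/-! A Catalan word `w₁ ⋯ wₙ` is the sequence of heights at which the up steps of a Dyck path
start; the path is recovered as `U D^(w₁+1-w₂) U D^(w₂+1-w₃) ⋯ U D^(wₙ+1)`. A short valley
`a > b, b + 1` becomes a run `D^(a+1-b)` of at least two down steps followed by `U U`, i.e. an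
occurrence of `DDUU`, and every occurrence of `DDUU` arises in this way. -/

theorem Finset.card_filter_range_succ (p : ℕ → Prop) [DecidablePred p] (n : ℕ) :
    ((Finset.range (n + 1)).filter p).card =
      ((Finset.range n).filter (fun i => p (i + 1))).card + if p 0 then 1 else 0 := by
  simp only [Finset.card_filter]
  exact Finset.sum_range_succ' _ n

theorem lValleys_one_singleton (c : ℕ) : lValleys 1 [c] = 0 := by
  simp [lValleys]

theorem lValleys_one_cons_cons (c a : ℕ) (r : List ℕ) :
    lValleys 1 (c :: a :: r) =
      lValleys 1 (a :: r) + if a < c ∧ r.head? = some (a + 1) then 1 else 0 := by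
  unfold lValleys
  rw [List.length_cons, Finset.card_filter_range_succ]
  congr 1
  · refine congrArg Finset.card (Finset.filter_congr fun i _ => ?_)
    simp only [Nat.lt_one_iff, forall_eq, add_zero, List.length_cons, List.getD_cons_succ]
    exact and_congr_left' (by omega)
  · rcases r with _ | ⟨b, r⟩ <;> simp [eq_comm]

theorem dduuCount_cons (x : Bool) (p : List Bool) :
    dduuCount (x :: p) =
      dduuCount p + if [false, false, true, true] <+: x :: p then 1 else 0 := by
  unfold dduuCount
  rw [List.length_cons, Finset.card_filter_range_succ]
  congr 1
  · refine congrArg Finset.card (Finset.filter_congr fun i _ => ?_)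
    simp only [List.getD_cons_succ]
    exact and_congr_left' (by omega)
  · rcases p with _ | ⟨y, _ | ⟨z, _ | ⟨u, p⟩⟩⟩ <;> simp [List.cons_prefix_cons]

theorem dduuCount_cons_true (p : List Bool) : dduuCount (true :: p) = dduuCount p := by
  simp [dduuCount_cons]

theorem dduuCount_replicate_false (d : ℕ) : dduuCount (List.replicate d false) = 0 := by
  induction d with
  | zero => rfl
  | succ d ih =>
    have : ¬[false, false, true, true] <+: List.replicate (d + 1) false := fun h => by
      simpa using h.subset (by simp : true ∈ [false, false, true, true])
    rw [List.replicate_succ, dduuCount_cons, ih, ← List.replicate_succ, if_neg this]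

theorem dduuCount_replicate_false_append_true (d : ℕ) (q : List Bool) :
    dduuCount (List.replicate d false ++ true :: q) =
      dduuCount q + if 2 ≤ d ∧ q.head? = some true then 1 else 0 := by
  induction d with
  | zero => simp [dduuCount_cons_true]
  | succ d ih =>
    rw [List.replicate_succ, List.cons_append, dduuCount_cons, ih]
    rcases d with _ | _ | d <;> rcases q with _ | ⟨y, q⟩ <;>
      simp [List.replicate_succ, List.cons_prefix_cons]

-- `w` can follow the letter `h - 1` in a Catalan word; for `h = 0`, `w` is a Catalan word.
def IsCatalanFrom : ℕ → List ℕ → Prop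
  | _, [] => True
  | h, a :: r => a ≤ h ∧ IsCatalanFrom (a + 1) r

theorem IsCatalanFrom.mono {h h' : ℕ} {w : List ℕ} (hw : IsCatalanFrom h w) (hh : h ≤ h') :
    IsCatalanFrom h' w := by
  cases w with
  | nil => trivial
  | cons a r => exact ⟨hw.1.trans hh, hw.2⟩

theorem isCatalanFrom_iff (h : ℕ) (w : List ℕ) :
    IsCatalanFrom h w ↔ w.getD 0 0 ≤ h ∧
      ∀ i, i + 1 < w.length → w.getD (i + 1) 0 ≤ w.getD i 0 + 1 := by
  induction w generalizing h with
  | nil => simp [IsCatalanFrom]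
  | cons a r ih =>
    simp only [IsCatalanFrom, ih, List.getD_cons_zero, List.length_cons, Nat.add_lt_add_iff_right]
    constructor
    · rintro ⟨ha, hb, hr⟩
      refine ⟨ha, fun i hi => ?_⟩
      rcases i with _ | i
      · simpa using hb
      · simpa using hr i (by omega)
    · rintro ⟨ha, hr⟩
      refine ⟨ha, ?_, fun i hi => by simpa using hr (i + 1) (by omega)⟩
      rcases r with _ | ⟨b, r⟩
      · simp
      · simpa using hr 0 (by simp)

theorem mem_catalanWord_iff (n : ℕ) (w : List ℕ) :
    w ∈ CatalanWord n ↔ w.length = n ∧ IsCatalanFrom 0 w := by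
  rw [isCatalanFrom_iff, Nat.le_zero]
  exact and_congr_right fun hlen => by subst hlen; rfl

theorem List.forall_take_cons {α : Type*} (P : List α → Prop) (x : α) (p : List α) :
    (∀ i, P ((x :: p).take i)) ↔ P [] ∧ ∀ i, P (x :: p.take i) :=
  ⟨fun h => ⟨h 0, fun i => h (i + 1)⟩, fun ⟨h0, h⟩ i => i.casesOn h0 h⟩

def IsDyckFrom : ℕ → List Bool → Prop
  | h, [] => h = 0
  | h, true :: p => IsDyckFrom (h + 1) p
  | 0, false :: _ => False
  | h + 1, false :: p => IsDyckFrom h p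

theorem isDyckFrom_iff (h : ℕ) (p : List Bool) :
    IsDyckFrom h p ↔ p.count false = p.count true + h ∧
      ∀ i, (p.take i).count false ≤ (p.take i).count true + h := by
  induction p generalizing h with
  | nil => simp [IsDyckFrom, eq_comm]
  | cons x p ih =>
    rw [List.forall_take_cons (fun l => l.count false ≤ l.count true + h)]
    have hTF (l : List Bool) : (true :: l).count false = l.count false :=
      List.count_cons_of_ne Bool.false_ne_true.symm
    have hFT (l : List Bool) : (false :: l).count true = l.count true :=
      List.count_cons_of_ne Bool.false_ne_true
    cases x with
    | true =>
      simp only [IsDyckFrom, ih, List.count_cons_self, hTF, List.count_nil, zero_le, true_and]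
      exact and_congr (by omega) (forall_congr' fun i => by omega)
    | false => cases h with
      | zero => exact iff_of_false id fun ⟨_, _, hpre⟩ => by simpa using hpre 0
      | succ h =>
        simp only [IsDyckFrom, ih, List.count_cons_self, hFT, List.count_nil, zero_le, true_and]
        exact and_congr (by omega) (forall_congr' fun i => by omega)

theorem mem_dyckPath_iff (n : ℕ) (p : List Bool) :
    p ∈ DyckPath n ↔ p.count true = n ∧ IsDyckFrom 0 p := by
  have hlen := p.count_true_add_count_false
  rw [isDyckFrom_iff, add_zero]
  constructor
  · rintro ⟨hlen', hn, hpre⟩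
    refine ⟨hn, by omega, fun i => ?_⟩
    rcases le_or_gt i (2 * n) with hi | hi
    · exact hpre i hi
    · rw [List.take_of_length_le (by omega)]
      omega
  · rintro ⟨hn, hp, hpre⟩
    exact ⟨by omega, hn, fun i _ => hpre i⟩

theorem isDyckFrom_replicate_false_append (d h : ℕ) (p : List Bool) :
    IsDyckFrom h (List.replicate d false ++ p) ↔ d ≤ h ∧ IsDyckFrom (h - d) p := by
  induction d generalizing h with
  | zero => simp
  | succ d ih =>
    cases h with
    | zero => simp [List.replicate_succ, IsDyckFrom]
    | succ h => simp [List.replicate_succ, IsDyckFrom, ih]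

def pathOfWord : ℕ → List ℕ → List Bool
  | h, [] => List.replicate h false
  | h, a :: r => List.replicate (h - a) false ++ true :: pathOfWord (a + 1) r

def upHeights : ℕ → List Bool → List ℕ
  | _, [] => []
  | h, true :: p => h :: upHeights (h + 1) p
  | h, false :: p => upHeights (h - 1) p

theorem count_true_pathOfWord (h : ℕ) (w : List ℕ) :
    (pathOfWord h w).count true = w.length := by
  induction w generalizing h with
  | nil => simp [pathOfWord, List.count_replicate]
  | cons a r ih => simp [pathOfWord, ih, List.count_replicate]

theorem isDyckFrom_pathOfWord {h : ℕ} {w : List ℕ} (hw : IsCatalanFrom h w) :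
    IsDyckFrom h (pathOfWord h w) := by
  induction w generalizing h with
  | nil =>
    rw [pathOfWord, ← List.append_nil (List.replicate h false), isDyckFrom_replicate_false_append,
      Nat.sub_self]
    exact ⟨le_rfl, rfl⟩
  | cons a r ih =>
    rw [pathOfWord, isDyckFrom_replicate_false_append, Nat.sub_sub_self hw.1]
    exact ⟨Nat.sub_le h a, ih hw.2⟩

theorem head?_pathOfWord_eq_some_true {h : ℕ} {w : List ℕ} (hw : IsCatalanFrom h w) :
    (pathOfWord h w).head? = some true ↔ w.head? = some h := by
  cases w with
  | nil => simp [pathOfWord, List.head?_replicate]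
  | cons a r =>
    rcases hw.1.lt_or_eq with ha | rfl
    · obtain ⟨d, hd⟩ := Nat.exists_eq_add_of_lt (Nat.sub_pos_of_lt ha)
      simp [pathOfWord, hd, List.replicate_succ, ha.ne]
    · simp [pathOfWord]

theorem pathOfWord_succ {h : ℕ} {w : List ℕ} (hw : IsCatalanFrom h w) :
    pathOfWord (h + 1) w = false :: pathOfWord h w := by
  cases w with
  | nil => simp [pathOfWord, List.replicate_succ]
  | cons a r => simp [pathOfWord, Nat.succ_sub hw.1, List.replicate_succ]

/- The starting height `c + 1` acts as a preceding letter `c`: a descent from it by at least two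
steps into `U U` is a short valley at `c`. -/
theorem dduuCount_pathOfWord_succ {c : ℕ} {w : List ℕ} (hw : IsCatalanFrom (c + 1) w) :
    dduuCount (pathOfWord (c + 1) w) = lValleys 1 (c :: w) := by
  induction w generalizing c with
  | nil => simp [pathOfWord, dduuCount_replicate_false, lValleys_one_singleton]
  | cons a r ih =>
    rw [pathOfWord, dduuCount_replicate_false_append_true, ih hw.2, lValleys_one_cons_cons]
    have hvalley : 2 ≤ c + 1 - a ↔ a < c := by omega
    simp only [hvalley, head?_pathOfWord_eq_some_true hw.2]

theorem dduuCount_pathOfWord_zero {w : List ℕ} (hw : IsCatalanFrom 0 w) :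
    dduuCount (pathOfWord 0 w) = lValleys 1 w := by
  cases w with
  | nil => rfl
  | cons a r =>
    obtain rfl : a = 0 := Nat.le_zero.1 hw.1
    rw [pathOfWord, Nat.sub_self, List.replicate_zero, List.nil_append, dduuCount_cons_true,
      dduuCount_pathOfWord_succ hw.2]

theorem upHeights_replicate_false_append (d h : ℕ) (p : List Bool) :
    upHeights h (List.replicate d false ++ p) = upHeights (h - d) p := by
  induction d generalizing h with
  | zero => rfl
  | succ d ih => rw [List.replicate_succ, List.cons_append, upHeights, ih, Nat.sub_sub, add_comm 1]

theorem length_upHeights (h : ℕ) (p : List Bool) : (upHeights h p).length = p.count true := by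
  induction p generalizing h with
  | nil => rfl
  | cons x p ih => cases x <;> simp [upHeights, ih]

theorem isCatalanFrom_upHeights (h : ℕ) (p : List Bool) : IsCatalanFrom h (upHeights h p) := by
  induction p generalizing h with
  | nil => trivial
  | cons x p ih =>
    cases x with
    | false => exact (ih (h - 1)).mono (Nat.sub_le h 1)
    | true => exact ⟨le_rfl, ih (h + 1)⟩

theorem upHeights_pathOfWord {h : ℕ} {w : List ℕ} (hw : IsCatalanFrom h w) :
    upHeights h (pathOfWord h w) = w := by
  induction w generalizing h with
  | nil =>
    rw [pathOfWord, ← List.append_nil (List.replicate h false), upHeights_replicate_false_append]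
    rfl
  | cons a r ih =>
    rw [pathOfWord, upHeights_replicate_false_append, Nat.sub_sub_self hw.1, upHeights, ih hw.2]

theorem pathOfWord_upHeights {h : ℕ} {p : List Bool} (hp : IsDyckFrom h p) :
    pathOfWord h (upHeights h p) = p := by
  induction p generalizing h with
  | nil => obtain rfl : h = 0 := hp; rfl
  | cons x p ih =>
    cases x with
    | true => simp [upHeights, pathOfWord, ih hp]
    | false =>
      cases h with
      | zero => exact hp.elim
      | succ h =>
        rw [upHeights, Nat.add_sub_cancel, pathOfWord_succ (isCatalanFrom_upHeights h p), ih hp]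

theorem pathOfWord_mem_dyckPath {n : ℕ} {w : List ℕ} (hw : w ∈ CatalanWord n) :
    pathOfWord 0 w ∈ DyckPath n := by
  rw [mem_catalanWord_iff] at hw
  rw [mem_dyckPath_iff, count_true_pathOfWord, hw.1]
  exact ⟨rfl, isDyckFrom_pathOfWord hw.2⟩

theorem upHeights_mem_catalanWord {n : ℕ} {p : List Bool} (hp : p ∈ DyckPath n) :
    upHeights 0 p ∈ CatalanWord n := by
  rw [mem_dyckPath_iff] at hp
  rw [mem_catalanWord_iff, length_upHeights, hp.1]
  exact ⟨rfl, isCatalanFrom_upHeights 0 p⟩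

theorem shortValleys_eq_dduu_general (n k : ℕ) :
    Nat.card {w : List ℕ | w ∈ CatalanWord n ∧ lValleys 1 w = k} =
      Nat.card {p : List Bool | p ∈ DyckPath n ∧ dduuCount p = k} := by
  have hW {w} (hw : w ∈ CatalanWord n) : IsCatalanFrom 0 w := ((mem_catalanWord_iff n w).1 hw).2
  have hP {p} (hp : p ∈ DyckPath n) : IsDyckFrom 0 p := ((mem_dyckPath_iff n p).1 hp).2
  refine Nat.card_congr
    { toFun := fun w => ⟨pathOfWord 0 w, pathOfWord_mem_dyckPath w.2.1, ?_⟩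
      invFun := fun p => ⟨upHeights 0 p, upHeights_mem_catalanWord p.2.1, ?_⟩
      left_inv := fun w => Subtype.ext (upHeights_pathOfWord (hW w.2.1))
      right_inv := fun p => Subtype.ext (pathOfWord_upHeights (hP p.2.1)) }
  · rw [dduuCount_pathOfWord_zero (hW w.2.1)]
    exact w.2.2
  · rw [← dduuCount_pathOfWord_zero (isCatalanFrom_upHeights 0 _), pathOfWord_upHeights (hP p.2.1)]
    exact p.2.2

/-- The number of Catalan words of length `n` with exactly `k` short valleys
(`1`-valleys) equals the number of Dyck paths of semilength `n` with exactly `k`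
occurrences of the factor `DDUU`. -/
theorem shortValleys_eq_dduu (n k : ℕ) (hn : 1 ≤ n) :
    Nat.card {w : List ℕ | w ∈ CatalanWord n ∧ lValleys 1 w = k} =
      Nat.card {p : List Bool | p ∈ DyckPath n ∧ dduuCount p = k} :=
  shortValleys_eq_dduu_general n k
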